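/- arXiv:2202.13520 — 5 statements merged into one kernel-verified Lean document; each statement's English description precedes it below -/
import Mathlib

section
/- In the all-defended setting, for every naive AM strategy π (i.e., π m ≥ 0 for all m and ∑_m π m ≤ 1), the naive malware strategy that attacks every environment with probability 1/2 (ρ m = 1/2 for all m) yields malware utility u_M(π, ρ) = (1/2)·(1 − (1/2)·∑_m π m) ≥ 1/4. Consequently, for every naive AM strategy π, the supremum of u_M(π, ·) over all malware strategies is at least 1/4. -/
/-! Against the uniform strategy `ρ ≡ 1/2` the malware's utility is `(1/2)(1 - (1/2)∑ π) ≥ 1/4`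
because `∑ π ≤ 1`. The utility is continuous in `ρ` on the compact cube `[0,1]^M`, so its values
there are bounded above and the supremum dominates this particular value. -/

open Finset

section

variable {M : Type*} [Fintype M]

theorem utility_const_strategy {e : M → ℝ} (hesum : ∑ m, e m = 1) (π : M → ℝ) (c : ℝ) :
    (∑ m, e m * c) * (1 - ∑ m, π m * c) = c * (1 - c * ∑ m, π m) := by
  rw [← sum_mul, ← sum_mul, hesum, one_mul, mul_comm (∑ m, π m)]

theorem bddAbove_utility (e π : M → ℝ) :
    BddAbove {u : ℝ | ∃ ρ : M → ℝ, (∀ m, 0 ≤ ρ m ∧ ρ m ≤ 1) ∧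
      u = (∑ m, e m * ρ m) * (1 - ∑ m, π m * ρ m)} := by
  have hcube : IsCompact (Set.Icc (0 : M → ℝ) 1) := isCompact_Icc
  refine ((hcube.image (f := fun ρ => (∑ m, e m * ρ m) * (1 - ∑ m, π m * ρ m))
    (by fun_prop)).bddAbove).mono ?_
  rintro _ ⟨ρ, hρ, rfl⟩
  exact ⟨ρ, ⟨fun m => (hρ m).1, fun m => (hρ m).2⟩, rfl⟩

end

theorem stmt_0_general {M : Type*} [Fintype M]
    (e : M → ℝ) (hesum : ∑ m, e m = 1)
    (π : M → ℝ) (hπsum : ∑ m, π m ≤ 1) :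
    (∑ m, e m * (1/2 : ℝ)) * (1 - ∑ m, π m * (1/2 : ℝ))
        = (1/2) * (1 - (1/2) * ∑ m, π m) ∧
    (1/4 : ℝ) ≤ (∑ m, e m * (1/2 : ℝ)) * (1 - ∑ m, π m * (1/2 : ℝ)) ∧
    (1/4 : ℝ) ≤ sSup {u : ℝ | ∃ ρ : M → ℝ, (∀ m, 0 ≤ ρ m ∧ ρ m ≤ 1) ∧
        u = (∑ m, e m * ρ m) * (1 - ∑ m, π m * ρ m)} := by
  have hvalue := utility_const_strategy hesum π (1/2)
  have hquarter : (1/4 : ℝ) ≤ (∑ m, e m * (1/2 : ℝ)) * (1 - ∑ m, π m * (1/2 : ℝ)) := by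
    rw [hvalue]
    linarith
  refine ⟨hvalue, hquarter, hquarter.trans (le_csSup (bddAbove_utility e π) ?_)⟩
  exact ⟨fun _ => 1/2, fun _ => by norm_num, rfl⟩

/-- In the all-defended setting, for every naive AM strategy `π`,
the naive malware strategy attacking every environment with probability `1/2`
yields malware utility `(1/2) * (1 - (1/2) * ∑ π m) ≥ 1/4`; consequently the
supremum of the malware's utility over all malware strategies is at least `1/4`.
Here `u_M(π, ρ) = (∑ m, e m * ρ m) * (1 - ∑ m, π m * ρ m)`. -/
theorem stmt_0 {M : Type*} [Fintype M] [Nonempty M]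
    (e : M → ℝ) (he : ∀ m, 0 ≤ e m) (hesum : ∑ m, e m = 1)
    (π : M → ℝ) (hπ : ∀ m, 0 ≤ π m) (hπsum : ∑ m, π m ≤ 1) :
    (∑ m, e m * (1/2 : ℝ)) * (1 - ∑ m, π m * (1/2 : ℝ))
        = (1/2) * (1 - (1/2) * ∑ m, π m) ∧
    (1/4 : ℝ) ≤ (∑ m, e m * (1/2 : ℝ)) * (1 - ∑ m, π m * (1/2 : ℝ)) ∧
    (1/4 : ℝ) ≤ sSup {u : ℝ | ∃ ρ : M → ℝ, (∀ m, 0 ≤ ρ m ∧ ρ m ≤ 1) ∧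
        u = (∑ m, e m * ρ m) * (1 - ∑ m, π m * ρ m)} :=
  stmt_0_general e hesum π hπsum
end

section
/- In the all-defended setting, if the AM uses the Existence strategy π = e (generating a sandbox of type m with probability e m), then for every malware strategy ρ one has u_M(e, ρ) = (∑_m e m·ρ m)·(1 − ∑_m e m·ρ m) ≤ 1/4, and equality holds for the strategy ρ m = 1/2 for all m. Hence attacking every environment with probability 1/2 is a best response of the malware to the Existence strategy. -/
theorem mul_one_sub_le_one_fourth (x : ℝ) : x * (1 - x) ≤ 1 / 4 := by
  nlinarith [sq_nonneg (x - 1 / 2)]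

theorem Finset.sum_mul_const_of_sum_eq_one {ι : Type*} (s : Finset ι) {w : ι → ℝ}
    (hw : ∑ i ∈ s, w i = 1) (c : ℝ) : ∑ i ∈ s, w i * c = c := by
  rw [← Finset.sum_mul, hw, one_mul]

theorem stmt_1_general {M : Type*} [Fintype M]
    (e : M → ℝ) (hesum : ∑ m, e m = 1) :
    (∀ ρ : M → ℝ, (∀ m, 0 ≤ ρ m ∧ ρ m ≤ 1) →
        (∑ m, e m * ρ m) * (1 - ∑ m, e m * ρ m) ≤ 1/4) ∧
    (∑ m, e m * (1/2 : ℝ)) * (1 - ∑ m, e m * (1/2 : ℝ)) = 1/4 ∧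
    (∀ ρ : M → ℝ, (∀ m, 0 ≤ ρ m ∧ ρ m ≤ 1) →
        (∑ m, e m * ρ m) * (1 - ∑ m, e m * ρ m) ≤
          (∑ m, e m * (1/2 : ℝ)) * (1 - ∑ m, e m * (1/2 : ℝ))) := by
  have half_value : (∑ m, e m * (1/2 : ℝ)) * (1 - ∑ m, e m * (1/2 : ℝ)) = 1/4 := by
    rw [Finset.univ.sum_mul_const_of_sum_eq_one hesum]
    norm_num
  refine ⟨fun ρ _ => mul_one_sub_le_one_fourth _, half_value, fun ρ _ => ?_⟩
  rw [half_value]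
  exact mul_one_sub_le_one_fourth _

/-- In the all-defended setting, against the Existence strategy
`π = e`, every malware strategy `ρ` gets utility
`(∑ m, e m * ρ m) * (1 - ∑ m, e m * ρ m) ≤ 1/4`, with equality for `ρ ≡ 1/2`.
Hence `ρ ≡ 1/2` is a best response of the malware to the Existence strategy. -/
theorem stmt_1 {M : Type*} [Fintype M] [Nonempty M]
    (e : M → ℝ) (he : ∀ m, 0 ≤ e m) (hesum : ∑ m, e m = 1) :
    (∀ ρ : M → ℝ, (∀ m, 0 ≤ ρ m ∧ ρ m ≤ 1) →
        (∑ m, e m * ρ m) * (1 - ∑ m, e m * ρ m) ≤ 1/4) ∧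
    (∑ m, e m * (1/2 : ℝ)) * (1 - ∑ m, e m * (1/2 : ℝ)) = 1/4 ∧
    (∀ ρ : M → ℝ, (∀ m, 0 ≤ ρ m ∧ ρ m ≤ 1) →
        (∑ m, e m * ρ m) * (1 - ∑ m, e m * ρ m) ≤
          (∑ m, e m * (1/2 : ℝ)) * (1 - ∑ m, e m * (1/2 : ℝ))) :=
  stmt_1_general e hesum
end

section
/- (Theorem 1) In the all-defended setting with a naive AM: for every naive AM strategy π and every malware strategy ρ' that maximizes u_M(π, ·) over all malware strategies, the AM utility satisfies u_AM(π, ρ') ≤ 3/4. Moreover, for the Existence strategy π = e, the malware strategy ρ m = 1/2 for all m maximizes u_M(e, ·), and u_AM(e, ρ) = 3/4. Hence the Existence strategy is AM-optimal in equilibrium, guaranteeing AM utility exactly 3/4. -/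
/-!
Against any naive strategy `π` the malware can play `ρ ≡ 1/2`, which earns
`1/2 · (1 - 1/2 · ∑ π) ≥ 1/4`; so every best response earns at least `1/4` and the AM at
most `3/4`. Against `π = e` the malware earns `x (1 - x)` with `x = ∑ e ρ`, which is at most
`1/4`, attained at `ρ ≡ 1/2`.
-/

open Finset

namespace AllDefended

variable {M : Type*} [Fintype M]

/-- `u_M(π, ρ)`, the malware's utility in the all-defended setting. -/
def malwareUtility (e π ρ : M → ℝ) : ℝ :=
  (∑ m, e m * ρ m) * (1 - ∑ m, π m * ρ m)

theorem sum_mul_const_of_sum_eq_one {e : M → ℝ} (hesum : ∑ m, e m = 1) (c : ℝ) :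
    ∑ m, e m * c = c := by
  rw [← sum_mul, hesum, one_mul]

theorem malwareUtility_const {e : M → ℝ} (hesum : ∑ m, e m = 1) (π : M → ℝ) (c : ℝ) :
    malwareUtility e π (fun _ => c) = c * (1 - c * ∑ m, π m) := by
  simp only [malwareUtility, sum_mul_const_of_sum_eq_one hesum, ← sum_mul, mul_comm c]

theorem quarter_le_malwareUtility_half {e π : M → ℝ} (hesum : ∑ m, e m = 1)
    (hπsum : ∑ m, π m ≤ 1) : 1 / 4 ≤ malwareUtility e π (fun _ => 1 / 2) := by
  rw [malwareUtility_const hesum]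
  linarith

theorem mul_one_sub_self_le_quarter (x : ℝ) : x * (1 - x) ≤ 1 / 4 := by
  nlinarith [sq_nonneg (x - 1 / 2)]

theorem malwareUtility_self_le_quarter (e ρ : M → ℝ) : malwareUtility e e ρ ≤ 1 / 4 :=
  mul_one_sub_self_le_quarter _

theorem malwareUtility_self_half {e : M → ℝ} (hesum : ∑ m, e m = 1) :
    malwareUtility e e (fun _ => 1 / 2) = 1 / 4 := by
  rw [malwareUtility_const hesum, hesum]
  norm_num

end AllDefended

open AllDefended in
theorem stmt_2_general {M : Type*} [Fintype M]
    (e : M → ℝ) (hesum : ∑ m, e m = 1) :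
    (∀ π : M → ℝ, (∀ m, 0 ≤ π m) → ∑ m, π m ≤ 1 →
      ∀ ρ' : M → ℝ, (∀ m, 0 ≤ ρ' m ∧ ρ' m ≤ 1) →
        (∀ ρ : M → ℝ, (∀ m, 0 ≤ ρ m ∧ ρ m ≤ 1) →
          (∑ m, e m * ρ m) * (1 - ∑ m, π m * ρ m) ≤
            (∑ m, e m * ρ' m) * (1 - ∑ m, π m * ρ' m)) →
        1 - (∑ m, e m * ρ' m) * (1 - ∑ m, π m * ρ' m) ≤ 3/4) ∧
    (∀ ρ : M → ℝ, (∀ m, 0 ≤ ρ m ∧ ρ m ≤ 1) →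
        (∑ m, e m * ρ m) * (1 - ∑ m, e m * ρ m) ≤
          (∑ m, e m * (1/2 : ℝ)) * (1 - ∑ m, e m * (1/2 : ℝ))) ∧
    1 - (∑ m, e m * (1/2 : ℝ)) * (1 - ∑ m, e m * (1/2 : ℝ)) = 3/4 := by
  have hhalf : malwareUtility e e (fun _ => 1 / 2) = 1 / 4 := malwareUtility_self_half hesum
  refine ⟨fun π _ hπsum ρ' _ hbest => ?_, fun ρ _ => ?_, ?_⟩
  · have hρ' : malwareUtility e π (fun _ => 1 / 2) ≤ malwareUtility e π ρ' :=
      hbest _ fun _ => by norm_num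
    change 1 - malwareUtility e π ρ' ≤ 3 / 4
    linarith [quarter_le_malwareUtility_half hesum hπsum]
  · exact (malwareUtility_self_le_quarter e ρ).trans hhalf.ge
  · change 1 - malwareUtility e e (fun _ => 1 / 2) = 3 / 4
    rw [hhalf]
    norm_num

/-- Theorem 1: In the all-defended setting with a naive AM, where
`u_M(π,ρ) = (∑ m, e m * ρ m) * (1 - ∑ m, π m * ρ m)` and `u_AM = 1 - u_M`:
for every naive AM strategy `π` and every malware best response `ρ'` to `π`,
`u_AM(π, ρ') ≤ 3/4`; moreover for the Existence strategy `π = e`, the strategy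
`ρ ≡ 1/2` is a malware best response and `u_AM(e, ρ) = 3/4`.  Hence Existence is
AM-optimal in equilibrium, guaranteeing AM utility exactly `3/4`. -/
theorem stmt_2 {M : Type*} [Fintype M] [Nonempty M]
    (e : M → ℝ) (he : ∀ m, 0 ≤ e m) (hesum : ∑ m, e m = 1) :
    (∀ π : M → ℝ, (∀ m, 0 ≤ π m) → ∑ m, π m ≤ 1 →
      ∀ ρ' : M → ℝ, (∀ m, 0 ≤ ρ' m ∧ ρ' m ≤ 1) →
        (∀ ρ : M → ℝ, (∀ m, 0 ≤ ρ m ∧ ρ m ≤ 1) →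
          (∑ m, e m * ρ m) * (1 - ∑ m, π m * ρ m) ≤
            (∑ m, e m * ρ' m) * (1 - ∑ m, π m * ρ' m)) →
        1 - (∑ m, e m * ρ' m) * (1 - ∑ m, π m * ρ' m) ≤ 3/4) ∧
    (∀ ρ : M → ℝ, (∀ m, 0 ≤ ρ m ∧ ρ m ≤ 1) →
        (∑ m, e m * ρ m) * (1 - ∑ m, e m * ρ m) ≤
          (∑ m, e m * (1/2 : ℝ)) * (1 - ∑ m, e m * (1/2 : ℝ))) ∧
    1 - (∑ m, e m * (1/2 : ℝ)) * (1 - ∑ m, e m * (1/2 : ℝ)) = 3/4 :=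
  stmt_2_general e hesum
end

section
/- In the all-defended setting, for every sophisticated AM strategy π (i.e., π r m ≥ 0 for all r, m and ∑_m π r m ≤ 1 for every r), the naive malware strategy that attacks every environment with probability 1/2 yields malware utility u_M(π, ρ) = (1/2)·∑_r e r·(1 − (1/2)·∑_m π r m) ≥ 1/4. Consequently, for every sophisticated AM strategy, the supremum of u_M(π, ·) over all malware strategies is at least 1/4. -/
open Finset

noncomputable def malwareUtility {M : Type*} [Fintype M] (e : M → ℝ) (π : M → M → ℝ)
    (ρ : M → ℝ) : ℝ :=
  ∑ r, e r * ρ r * (1 - ∑ m, π r m * ρ m)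

section

variable {M : Type*} [Fintype M] {e : M → ℝ} {π : M → M → ℝ}

theorem malwareUtility_const (e : M → ℝ) (π : M → M → ℝ) (c : ℝ) :
    malwareUtility e π (fun _ => c) = c * ∑ r, e r * (1 - c * ∑ m, π r m) := by
  rw [malwareUtility, mul_sum]
  exact sum_congr rfl fun r _ => by rw [← sum_mul]; ring

theorem mul_one_sub_le_malwareUtility_const (he : ∀ r, 0 ≤ e r) (hesum : ∑ r, e r = 1)
    (hπsum : ∀ r, ∑ m, π r m ≤ 1) (c : ℝ) :
    c * (1 - c) ≤ malwareUtility e π (fun _ => c) := by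
  calc c * (1 - c) = ∑ r, e r * (c * (1 - c)) := by rw [← sum_mul, hesum, one_mul]
    _ ≤ ∑ r, e r * c * (1 - ∑ m, π r m * c) := by
      refine sum_le_sum fun r _ => ?_
      have hcc : c * c * ∑ m, π r m ≤ c * c := mul_le_of_le_one_right (mul_self_nonneg c) (hπsum r)
      rw [← sum_mul]
      nlinarith [he r]

theorem malwareUtility_le_sum (he : ∀ r, 0 ≤ e r) (hπ : ∀ r m, 0 ≤ π r m) {ρ : M → ℝ}
    (hρ : ∀ m, 0 ≤ ρ m ∧ ρ m ≤ 1) : malwareUtility e π ρ ≤ ∑ r, e r := by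
  refine sum_le_sum fun r _ => ?_
  have hsum : 0 ≤ ∑ m, π r m * ρ m := sum_nonneg fun m _ => mul_nonneg (hπ r m) (hρ m).1
  have heρ : e r * ρ r ≤ e r := mul_le_of_le_one_right (he r) (hρ r).2
  nlinarith [mul_nonneg (mul_nonneg (he r) (hρ r).1) hsum]

end

theorem stmt_3_general {M : Type*} [Fintype M]
    (e : M → ℝ) (he : ∀ r, 0 ≤ e r) (hesum : ∑ r, e r = 1)
    (π : M → M → ℝ) (hπ : ∀ r m, 0 ≤ π r m) (hπsum : ∀ r, ∑ m, π r m ≤ 1) :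
    (∑ r, e r * (1/2 : ℝ) * (1 - ∑ m, π r m * (1/2 : ℝ)))
        = (1/2) * ∑ r, e r * (1 - (1/2) * ∑ m, π r m) ∧
    (1/4 : ℝ) ≤ ∑ r, e r * (1/2 : ℝ) * (1 - ∑ m, π r m * (1/2 : ℝ)) ∧
    (1/4 : ℝ) ≤ sSup {u : ℝ | ∃ ρ : M → ℝ, (∀ m, 0 ≤ ρ m ∧ ρ m ≤ 1) ∧
        u = ∑ r, e r * ρ r * (1 - ∑ m, π r m * ρ m)} := by
  have hhalf : (1/4 : ℝ) ≤ malwareUtility e π fun _ => 1/2 := by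
    have := mul_one_sub_le_malwareUtility_const he hesum hπsum (1/2)
    norm_num at this ⊢
    exact this
  have hbdd : BddAbove {u : ℝ | ∃ ρ : M → ℝ, (∀ m, 0 ≤ ρ m ∧ ρ m ≤ 1) ∧
      u = malwareUtility e π ρ} := by
    refine ⟨∑ r, e r, ?_⟩
    rintro u ⟨ρ, hρ, rfl⟩
    exact malwareUtility_le_sum he hπ hρ
  refine ⟨malwareUtility_const e π (1/2), hhalf, hhalf.trans (le_csSup hbdd ?_)⟩
  exact ⟨fun _ => 1/2, fun _ => by norm_num, rfl⟩

/-- In the all-defended setting, for every sophisticated AM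
strategy `π`, the naive malware strategy attacking every environment with
probability `1/2` yields malware utility
`(1/2) * ∑ r, e r * (1 - (1/2) * ∑ m, π r m) ≥ 1/4`; consequently the supremum
of `u_M(π, ·)` over all malware strategies is at least `1/4`.  Here
`u_M(π,ρ) = ∑ r, e r * ρ r * (1 - ∑ m, π r m * ρ m)`. -/
theorem stmt_3 {M : Type*} [Fintype M] [Nonempty M]
    (e : M → ℝ) (he : ∀ r, 0 ≤ e r) (hesum : ∑ r, e r = 1)
    (π : M → M → ℝ) (hπ : ∀ r m, 0 ≤ π r m) (hπsum : ∀ r, ∑ m, π r m ≤ 1) :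
    (∑ r, e r * (1/2 : ℝ) * (1 - ∑ m, π r m * (1/2 : ℝ)))
        = (1/2) * ∑ r, e r * (1 - (1/2) * ∑ m, π r m) ∧
    (1/4 : ℝ) ≤ ∑ r, e r * (1/2 : ℝ) * (1 - ∑ m, π r m * (1/2 : ℝ)) ∧
    (1/4 : ℝ) ≤ sSup {u : ℝ | ∃ ρ : M → ℝ, (∀ m, 0 ≤ ρ m ∧ ρ m ≤ 1) ∧
        u = ∑ r, e r * ρ r * (1 - ∑ m, π r m * ρ m)} :=
  stmt_3_general e he hesum π hπ hπsum
end

section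
/- For every s ∈ [0,1], the maximum over c ∈ [0,1] of c·(1 − c·s) equals 1 − s if s ≤ 1/2 and equals 1/(4·s) if s ≥ 1/2; in particular this maximum is always at least 1/4, with equality if and only if s = 1. Consequently, in the all-defended setting against a naive malware (which attacks every environment with the same probability c, obtaining utility c·(1 − c·∑_m π m)), any naive AM strategy that always creates a sandbox (∑_m π m = 1) minimizes the naive malware's best-response utility and is therefore AM-optimal. -/
/-!
The utility `c ↦ c (1 - c s)` is a concave parabola with vertex `c = 1/(2s)`: for `s ≤ 1/2` the
vertex lies beyond `1` and the maximum over `[0,1]` is `1 - s` at `c = 1`, otherwise it is the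
vertex value `1/(4s)`. On `[0,1]` both branches are at least `1/4`, with equality only at `s = 1`;
hence a strategy with total sandbox probability `1` leaves the malware the least.
-/

namespace NaiveMalware

/-- Utilities available to a naive malware attacking with probability `c ∈ [0,1]`
against total sandbox probability `s`. -/
def utilities (s : ℝ) : Set ℝ :=
  {v | ∃ c : ℝ, 0 ≤ c ∧ c ≤ 1 ∧ v = c * (1 - c * s)}

noncomputable def maxUtility (s : ℝ) : ℝ :=
  if s ≤ 1/2 then 1 - s else 1 / (4 * s)

theorem isGreatest_utilities (s : ℝ) :
    IsGreatest (utilities s) (maxUtility s) := by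
  unfold maxUtility
  split_ifs with h
  · refine ⟨⟨1, zero_le_one, le_rfl, by ring⟩, ?_⟩
    rintro v ⟨c, hc0, hc1, rfl⟩
    have hfactor : 1 - s - c * (1 - c * s) = (1 - c) * (1 - s * (1 + c)) := by ring
    have hslope : 0 ≤ 1 - s * (1 + c) := by
      rcases le_total 0 s with hs | hs <;> nlinarith
    rw [← sub_nonneg, hfactor]
    exact mul_nonneg (sub_nonneg.mpr hc1) hslope
  · have hs : 0 < s := by linarith
    refine ⟨⟨1 / (2 * s), by positivity, ?_, by field_simp; ring⟩, ?_⟩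
    · rw [div_le_one (by positivity)]
      linarith
    · rintro v ⟨c, -, -, rfl⟩
      have hvertex : 1 / (4 * s) - c * (1 - c * s) = s * (c - 1 / (2 * s)) ^ 2 := by
        field_simp
        ring
      rw [← sub_nonneg, hvertex]
      positivity

theorem sSup_utilities (s : ℝ) : sSup (utilities s) = maxUtility s :=
  (isGreatest_utilities s).csSup_eq

theorem one_fourth_le_maxUtility {s : ℝ} (hs1 : s ≤ 1) : 1 / 4 ≤ maxUtility s := by
  unfold maxUtility
  split_ifs with h
  · linarith
  · rw [le_div_iff₀ (by linarith)]
    linarith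

theorem maxUtility_eq_one_fourth_iff {s : ℝ} : maxUtility s = 1 / 4 ↔ s = 1 := by
  unfold maxUtility
  split_ifs with h
  · constructor <;> intro h' <;> linarith
  · rw [div_eq_div_iff (by linarith) (by norm_num)]
    constructor <;> intro h' <;> linarith

theorem maxUtility_one : maxUtility 1 = 1 / 4 :=
  maxUtility_eq_one_fourth_iff.mpr rfl

end NaiveMalware

open NaiveMalware in
theorem stmt_14_general {M : Type*} [Fintype M]
    (π : M → ℝ) (hπsum : ∑ m, π m = 1) :
    (∀ s : ℝ, 0 ≤ s → s ≤ 1 →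
      IsGreatest {v : ℝ | ∃ c : ℝ, 0 ≤ c ∧ c ≤ 1 ∧ v = c * (1 - c * s)}
        (if s ≤ 1/2 then 1 - s else 1 / (4 * s)) ∧
      (1/4 : ℝ) ≤ (if s ≤ 1/2 then 1 - s else 1 / (4 * s)) ∧
      ((if s ≤ 1/2 then 1 - s else 1 / (4 * s)) = 1/4 ↔ s = 1)) ∧
    (∀ π' : M → ℝ, (∀ m, 0 ≤ π' m) → ∑ m, π' m ≤ 1 →
      sSup {v : ℝ | ∃ c : ℝ, 0 ≤ c ∧ c ≤ 1 ∧ v = c * (1 - c * ∑ m, π m)} ≤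
        sSup {v : ℝ | ∃ c : ℝ, 0 ≤ c ∧ c ≤ 1 ∧
          v = c * (1 - c * ∑ m, π' m)}) := by
  refine ⟨fun s _ hs1 => ⟨isGreatest_utilities s, one_fourth_le_maxUtility hs1,
    maxUtility_eq_one_fourth_iff⟩, fun π' _ hπ'sum => ?_⟩
  calc sSup (utilities (∑ m, π m)) = maxUtility 1 := by
        rw [hπsum]
        exact sSup_utilities 1
    _ = 1 / 4 := maxUtility_one
    _ ≤ maxUtility (∑ m, π' m) := one_fourth_le_maxUtility hπ'sum
    _ = sSup (utilities (∑ m, π' m)) := (sSup_utilities _).symm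

/-- For every `s ∈ [0,1]`, the maximum over `c ∈ [0,1]` of
`c * (1 - c * s)` equals `1 - s` if `s ≤ 1/2` and `1/(4s)` if `s ≥ 1/2`; this
maximum is always at least `1/4`, with equality iff `s = 1`.  Consequently, in
the all-defended setting against a naive malware (attacking every environment
with the same probability `c`, obtaining utility `c * (1 - c * ∑ m, π m)`),
any naive AM strategy with `∑ m, π m = 1` (always creating a sandbox) minimizes
the naive malware's best-response utility and is therefore AM-optimal. -/
theorem stmt_14 {M : Type*} [Fintype M] [Nonempty M]
    (e : M → ℝ) (he : ∀ m, 0 ≤ e m) (hesum : ∑ m, e m = 1)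
    (π : M → ℝ) (hπ : ∀ m, 0 ≤ π m) (hπsum : ∑ m, π m = 1) :
    (∀ s : ℝ, 0 ≤ s → s ≤ 1 →
      IsGreatest {v : ℝ | ∃ c : ℝ, 0 ≤ c ∧ c ≤ 1 ∧ v = c * (1 - c * s)}
        (if s ≤ 1/2 then 1 - s else 1 / (4 * s)) ∧
      (1/4 : ℝ) ≤ (if s ≤ 1/2 then 1 - s else 1 / (4 * s)) ∧
      ((if s ≤ 1/2 then 1 - s else 1 / (4 * s)) = 1/4 ↔ s = 1)) ∧
    (∀ π' : M → ℝ, (∀ m, 0 ≤ π' m) → ∑ m, π' m ≤ 1 →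
      sSup {v : ℝ | ∃ c : ℝ, 0 ≤ c ∧ c ≤ 1 ∧ v = c * (1 - c * ∑ m, π m)} ≤
        sSup {v : ℝ | ∃ c : ℝ, 0 ≤ c ∧ c ≤ 1 ∧
          v = c * (1 - c * ∑ m, π' m)}) :=
  stmt_14_general π hπsum
end
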